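/- arXiv:2006.01265 — 3 statements merged into one kernel-verified Lean document; each statement's English description precedes it below -/
import Mathlib

section
/- Asymptotic concentration of priors in fictitious play (Theorem 2, concentration part): Let f₀ be a continuous, nonnegative function with compact support contained in ℝ^d_{>0} and unit integral, let b̄ : [0,∞) → S_{d−1} be continuous, and let f(p,t) = f₀(p − ∫₀ᵗ b̄(τ)dτ) satisfy the consistency condition b̄(t) = ∫_{ℝ^d} b(p) f(p,t) dp for all t ≥ 0. Define the mean prior P(t) = ∫_{ℝ^d} (p/Σ_i p_i) f(p,t) dp. Suppose P(t) → P₀ as t → ∞. Then for every ε > 0 there is T(ε) such that for all t > T(ε), the projected support {p/Σ_i p_i : p ∈ supp f(·,t)} is contained in the ball of radius ε around P₀ intersected with S_{d−1}. -/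
open MeasureTheory Filter Topology

noncomputable section

abbrev E (d : ℕ) := EuclideanSpace ℝ (Fin d)

/-- The probability simplex. -/
def simplex (d : ℕ) : Set (E d) := {p | (∀ i, 0 ≤ p i) ∧ ∑ i, p i = 1}

/-- Payoff to pure strategy `i` against mixed strategy `p`. -/
def payoff {d : ℕ} (A : Matrix (Fin d) (Fin d) ℝ) (p : E d) (i : Fin d) : ℝ := ∑ k, A i k * p k

/-- The set of best-reply indices. -/
def argmaxSet {d : ℕ} (A : Matrix (Fin d) (Fin d) ℝ) (p : E d) : Finset (Fin d) :=
  Finset.univ.filter fun i => ∀ j, payoff A p j ≤ payoff A p i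

/-- The best-response correspondence. -/
def BRset {d : ℕ} (A : Matrix (Fin d) (Fin d) ℝ) (p : E d) : Set (E d) :=
  convexHull ℝ {x | ∃ i ∈ argmaxSet A p, x = EuclideanSpace.single i (1:ℝ)}

/-- Barycentric single-valued best-response selection. -/
def brSel {d : ℕ} (A : Matrix (Fin d) (Fin d) ℝ) (p : E d) : E d :=
  ((argmaxSet A ((∑ i, p i)⁻¹ • p)).card : ℝ)⁻¹ •
    ∑ i ∈ argmaxSet A ((∑ i, p i)⁻¹ • p), EuclideanSpace.single i (1:ℝ)

/-- The representation formula along characteristics. -/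
def repFormula {d : ℕ} (A : Matrix (Fin d) (Fin d) ℝ) (f0 : E d → ℝ) (bbar : ℝ → E d)
    (p : E d) (t : ℝ) : ℝ :=
  f0 (p - ∫ τ in (0:ℝ)..t, bbar τ) *
    Real.exp (∫ τ in (0:ℝ)..t, ∑ i, ∑ j, A i j *
      ((brSel A (p - ∫ s in τ..t, bbar s)) i * (bbar τ) j - (bbar τ) i * (bbar τ) j))

/-- Admissible initial datum: C¹, nonnegative, compact support in the open orthant, unit mass. -/
def IsAdmissibleInit {d : ℕ} (f0 : E d → ℝ) : Prop :=
  ContDiff ℝ 1 f0 ∧ (∀ p, 0 ≤ f0 p) ∧ HasCompactSupport f0 ∧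
  (tsupport f0 ⊆ {p : E d | ∀ i, 0 < p i}) ∧ (∫ p, f0 p) = 1

/-- Consistent solution of the cultural-evolution model on `[0,T]`. -/
def IsConsistentSolution {d : ℕ} (A : Matrix (Fin d) (Fin d) ℝ) (T : ℝ)
    (f0 : E d → ℝ) (f : E d → ℝ → ℝ) (bbar : ℝ → E d) : Prop :=
  ContinuousOn bbar (Set.Icc 0 T) ∧
  (∀ t ∈ Set.Icc (0:ℝ) T, bbar t ∈ simplex d) ∧
  (∀ p t, f p t = repFormula A f0 bbar p t) ∧
  (∀ t ∈ Set.Icc (0:ℝ) T, bbar t = ∫ p, f p t • brSel A p)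

section Aux

lemma simplex_norm_le' {d : ℕ} {x : E d} (hx : x ∈ simplex d) : ‖x‖ ≤ 1 := by
  obtain ⟨h0, h1⟩ := hx
  rw [EuclideanSpace.norm_eq]
  have hle : ∑ i, ‖x i‖ ^ 2 ≤ 1 := by
    have : ∀ i ∈ Finset.univ, ‖x i‖ ^ 2 ≤ x i := by
      intro i _
      have hxi1 : x i ≤ 1 := by
        have := Finset.single_le_sum (f := fun i => x i) (fun j _ => h0 j) (Finset.mem_univ i)
        linarith
      rw [Real.norm_eq_abs, sq_abs]
      nlinarith [h0 i]
    calc ∑ i, ‖x i‖ ^ 2 ≤ ∑ i, x i := Finset.sum_le_sum this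
      _ = 1 := h1
  calc Real.sqrt (∑ i, ‖x i‖ ^ 2) ≤ Real.sqrt 1 := Real.sqrt_le_sqrt hle
    _ = 1 := Real.sqrt_one

end Aux

set_option maxHeartbeats 1000000 in
/-- Asymptotic concentration of priors in fictitious play
(Theorem 2, concentration part). -/
theorem concentration_of_priors (d : ℕ) (hd : 1 ≤ d)
    (A : Matrix (Fin d) (Fin d) ℝ) (hA : ∀ i j, 0 ≤ A i j)
    (f0 : E d → ℝ) (hf0c : Continuous f0) (hpos : ∀ p, 0 ≤ f0 p)
    (hcs : HasCompactSupport f0) (hsupp : tsupport f0 ⊆ {p : E d | ∀ i, 0 < p i})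
    (hmass : (∫ p, f0 p) = 1)
    (bbar : ℝ → E d) (hb : ContinuousOn bbar (Set.Ici 0))
    (hbS : ∀ t : ℝ, 0 ≤ t → bbar t ∈ simplex d)
    (f : E d → ℝ → ℝ)
    (hf : ∀ p t, f p t = f0 (p - ∫ τ in (0:ℝ)..t, bbar τ))
    (hcons : ∀ t : ℝ, 0 ≤ t → bbar t = ∫ p, f p t • brSel A p)
    (P0 : E d)
    (hP : Tendsto (fun t => ∫ p, f p t • ((∑ i, p i)⁻¹ • p)) atTop (𝓝 P0)) :
    ∀ ε > (0:ℝ), ∃ Tε : ℝ, ∀ t > Tε, ∀ p ∈ Function.support (fun q => f q t),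
      (∑ i, p i)⁻¹ • p ∈ Metric.ball P0 ε ∩ simplex d := by
  intro ε hε
  haveI : Nonempty (Fin d) := ⟨⟨0, hd⟩⟩
  obtain ⟨B, hBdef⟩ : ∃ B : ℝ → E d, ∀ t, B t = ∫ τ in (0:ℝ)..t, bbar τ :=
    ⟨_, fun t => rfl⟩
  have hft : ∀ p t, f p t = f0 (p - B t) := by
    intro p t; rw [hf, hBdef]
  -- interval integrability of bbar
  have hbint : ∀ t : ℝ, 0 ≤ t → IntervalIntegrable bbar MeasureTheory.volume 0 t := by
    intro t ht
    refine (hb.mono ?_).intervalIntegrable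
    rw [Set.uIcc_of_le ht]
    exact fun x hx => hx.1
  -- coordinates of B
  have hBi : ∀ t : ℝ, 0 ≤ t → ∀ i, B t i = ∫ τ in (0:ℝ)..t, bbar τ i := by
    intro t ht i
    rw [hBdef]
    exact ((EuclideanSpace.proj i : E d →L[ℝ] ℝ).intervalIntegral_comp_comm (hbint t ht)).symm
  have hBnonneg : ∀ t : ℝ, 0 ≤ t → ∀ i, 0 ≤ B t i := by
    intro t ht i
    rw [hBi t ht i]
    exact intervalIntegral.integral_nonneg ht (fun τ hτ => (hbS τ hτ.1).1 i)
  have hBsum : ∀ t : ℝ, 0 ≤ t → ∑ i, B t i = t := by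
    intro t ht
    have hci : ∀ i ∈ Finset.univ, IntervalIntegrable (fun τ => bbar τ i) MeasureTheory.volume 0 t := by
      intro i _
      refine ((((EuclideanSpace.proj i : E d →L[ℝ] ℝ).continuous.comp_continuousOn hb)).mono ?_).intervalIntegrable
      rw [Set.uIcc_of_le ht]
      exact fun x hx => hx.1
    have h1 : ∑ i, B t i = ∫ τ in (0:ℝ)..t, ∑ i, bbar τ i := by
      rw [intervalIntegral.integral_finset_sum hci]
      exact Finset.sum_congr rfl fun i _ => hBi t ht i
    have h2 : (∫ τ in (0:ℝ)..t, ∑ i, bbar τ i) = ∫ τ in (0:ℝ)..t, (1:ℝ) := by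
      apply intervalIntegral.integral_congr
      intro τ hτ
      rw [Set.uIcc_of_le ht] at hτ
      exact (hbS τ hτ.1).2
    rw [h1, h2]
    simp
  have hBnorm : ∀ t : ℝ, 0 ≤ t → ‖B t‖ ≤ t := by
    intro t ht
    rw [hBdef]
    have := intervalIntegral.norm_integral_le_of_norm_le_const
      (C := 1) (f := bbar) (a := (0:ℝ)) (b := t) ?_
    · calc ‖∫ τ in (0:ℝ)..t, bbar τ‖ ≤ 1 * |t - 0| := this
        _ = t := by rw [sub_zero, abs_of_nonneg ht, one_mul]
    · intro x hx
      rw [Set.uIoc_of_le ht] at hx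
      exact simplex_norm_le' (hbS x hx.1.le)
  -- constants from compactness
  have hK : IsCompact (tsupport f0) := hcs
  have hKne : (tsupport f0).Nonempty := by
    by_contra h
    rw [Set.not_nonempty_iff_eq_empty] at h
    have h0 : ∀ p, f0 p = 0 := by
      intro p
      by_contra hp
      exact Set.notMem_empty p (h ▸ subset_tsupport f0 hp)
    simp [h0] at hmass
  have hScont : Continuous (fun p : E d => ∑ i, p i) :=
    continuous_finset_sum _ fun i _ => (EuclideanSpace.proj i : E d →L[ℝ] ℝ).continuous
  obtain ⟨q1, hq1K, hq1min⟩ := hK.exists_isMinOn hKne hScont.continuousOn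
  obtain ⟨q2, hq2K, hq2max⟩ := hK.exists_isMaxOn hKne hScont.continuousOn
  obtain ⟨q3, hq3K, hq3max⟩ := hK.exists_isMaxOn hKne continuous_norm.continuousOn
  set c1 := ∑ i, q1 i with hc1def
  set C := ∑ i, q2 i with hCdef
  set R := ‖q3‖ with hRdef
  have hc1pos : 0 < c1 := Finset.sum_pos (fun i _ => hsupp hq1K i) Finset.univ_nonempty
  have hCpos : 0 < C := lt_of_lt_of_le hc1pos (hq2max hq1K)
  have hR0 : (0:ℝ) ≤ R := norm_nonneg _
  set M := R + C with hMdef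
  have hMpos : 0 < M := by positivity
  -- facts about points in the time-t support
  have hsupp_t : ∀ t p, f p t ≠ 0 → p - B t ∈ tsupport f0 := by
    intro t p hp
    apply subset_tsupport f0
    rw [hft] at hp
    exact hp
  have hq_facts : ∀ q ∈ tsupport f0, c1 ≤ ∑ i, q i ∧ ∑ i, q i ≤ C ∧ ‖q‖ ≤ R :=
    fun q hq => ⟨hq1min hq, hq2max hq, hq3max hq⟩
  have hsub_apply : ∀ (p : E d) t (i : Fin d), (p - B t) i = p i - B t i := by intro p t i; simp [PiLp.sub_apply]
  have hsum_p : ∀ t, 0 ≤ t → ∀ p, f p t ≠ 0 → ∑ i, p i = (∑ i, (p - B t) i) + t := by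
    intro t ht p hp
    have : ∑ i, (p - B t) i = ∑ i, p i - ∑ i, B t i := by
      simp [hsub_apply, Finset.sum_sub_distrib]
    rw [this, hBsum t ht]
    ring
  -- key geometric estimate on the support
  have hkey : ∀ t : ℝ, 0 < t → ∀ p, f p t ≠ 0 →
      ‖(∑ i, p i)⁻¹ • p - t⁻¹ • B t‖ ≤ M / t := by
    intro t ht p hp
    have ht' : (0:ℝ) ≤ t := ht.le
    have hqK := hsupp_t t p hp
    obtain ⟨hs1, hs2, hs3⟩ := hq_facts _ hqK
    set q : E d := p - B t with hqdef
    set s := ∑ i, q i with hsdef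
    have hspos : 0 < s := lt_of_lt_of_le hc1pos hs1
    have hpsum : ∑ i, p i = s + t := hsum_p t ht' p hp
    have hpq : p = q + B t := by rw [hqdef]; abel
    have hst : 0 < s + t := by linarith
    have hdec : (∑ i, p i)⁻¹ • p - t⁻¹ • B t = (s+t)⁻¹ • q + ((s+t)⁻¹ - t⁻¹) • B t := by
      rw [hpsum]
      nth_rewrite 1 [hpq]
      module
    rw [hdec]
    have hBn : ‖B t‖ ≤ t := hBnorm t ht'
    have hinv : (s+t)⁻¹ ≤ t⁻¹ := by
      apply inv_anti₀ ht
      linarith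
    have h1 : ‖(s+t)⁻¹ • q‖ ≤ R / t := by
      rw [norm_smul, Real.norm_eq_abs, abs_of_pos (inv_pos.mpr hst)]
      calc (s+t)⁻¹ * ‖q‖ ≤ t⁻¹ * R :=
            mul_le_mul hinv hs3 (norm_nonneg _) (inv_nonneg.mpr ht')
        _ = R / t := by rw [inv_mul_eq_div]
    have h2 : ‖((s+t)⁻¹ - t⁻¹) • B t‖ ≤ C / t := by
      rw [norm_smul, Real.norm_eq_abs]
      have habs : |(s+t)⁻¹ - t⁻¹| = t⁻¹ - (s+t)⁻¹ := by
        rw [abs_of_nonpos (by linarith), neg_sub]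
      rw [habs]
      have hmul : (t⁻¹ - (s+t)⁻¹) * ‖B t‖ ≤ (t⁻¹ - (s+t)⁻¹) * t :=
        mul_le_mul_of_nonneg_left hBn (by linarith)
      refine hmul.trans ?_
      have heq : (t⁻¹ - (s+t)⁻¹) * t = s / (s+t) := by
        field_simp
        ring
      rw [heq, div_le_div_iff₀ hst ht]
      nlinarith
    calc ‖(s+t)⁻¹ • q + ((s+t)⁻¹ - t⁻¹) • B t‖
        ≤ ‖(s+t)⁻¹ • q‖ + ‖((s+t)⁻¹ - t⁻¹) • B t‖ := norm_add_le _ _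
      _ ≤ R/t + C/t := add_le_add h1 h2
      _ = M/t := by rw [← add_div]
  -- regularity of f(·,t)
  have hfc : ∀ t, Continuous (fun p => f p t) := by
    intro t
    have : (fun p => f p t) = fun p => f0 (p - B t) := funext fun p => hft p t
    rw [this]
    exact hf0c.comp (continuous_id.sub continuous_const)
  have hfcs : ∀ t, HasCompactSupport (fun p => f p t) := by
    intro t
    have hK' : IsCompact ((fun q : E d => q + B t) '' tsupport f0) :=
      hK.image (continuous_id.add continuous_const)
    refine HasCompactSupport.intro hK' ?_
    intro x hx
    by_contra hx0
    exact hx ⟨x - B t, hsupp_t t x hx0, by show x - B t + B t = x; abel⟩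
  have hfint : ∀ t, Integrable (fun p => f p t) := fun t =>
    (hfc t).integrable_of_hasCompactSupport (hfcs t)
  have hfnn : ∀ p t, 0 ≤ f p t := by
    intro p t; rw [hft]; exact hpos _
  have hmass_t : ∀ t, (∫ p, f p t) = 1 := by
    intro t
    calc (∫ p, f p t) = ∫ p, f0 (p - B t) := by simp only [hft]
      _ = ∫ p, f0 p := integral_sub_right_eq_self f0 (B t)
      _ = 1 := hmass
  -- integrability of the projected integrand
  have hGc : ∀ t, 0 ≤ t → Continuous (fun p => f p t • ((∑ i, p i)⁻¹ • p)) := by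
    intro t ht
    rw [continuous_iff_continuousAt]
    intro p0
    by_cases h0 : (∑ i, p0 i) = 0
    · have hopen : IsOpen {p : E d | ∑ i, p i < c1} := isOpen_lt hScont continuous_const
      have hmem : p0 ∈ {p : E d | ∑ i, p i < c1} := by
        rw [Set.mem_setOf_eq, h0]; exact hc1pos
      have hev : ∀ p ∈ {p : E d | ∑ i, p i < c1}, f p t • ((∑ i, p i)⁻¹ • p) = (0 : E d) := by
        intro p hp
        rcases eq_or_ne (f p t) 0 with h | h
        · simp [h]
        · exfalso
          have h1 := hsum_p t ht p h
          have h2 := (hq_facts _ (hsupp_t t p h)).1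
          rw [Set.mem_setOf_eq] at hp
          linarith
      exact ContinuousAt.congr continuousAt_const
        (Filter.eventuallyEq_of_mem (hopen.mem_nhds hmem) hev).symm
    · exact ((hfc t).continuousAt).smul (((hScont.continuousAt).inv₀ h0).smul continuousAt_id)
  have hGcs : ∀ t, HasCompactSupport (fun p => f p t • ((∑ i, p i)⁻¹ • p)) := fun t =>
    (hfcs t).smul_right
  have hGint : ∀ t, 0 ≤ t → Integrable (fun p => f p t • ((∑ i, p i)⁻¹ • p)) := fun t ht =>
    (hGc t ht).integrable_of_hasCompactSupport (hGcs t)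
  -- the mean prior is close to the normalized drift
  have hPb : ∀ t : ℝ, 0 < t →
      ‖(∫ p, f p t • ((∑ i, p i)⁻¹ • p)) - t⁻¹ • B t‖ ≤ M / t := by
    intro t ht
    have hint1 := hGint t ht.le
    have hint2 : Integrable (fun p => f p t • (t⁻¹ • B t)) := (hfint t).smul_const _
    have heq : (∫ p, f p t • ((∑ i, p i)⁻¹ • p)) - t⁻¹ • B t
        = ∫ p, (f p t • ((∑ i, p i)⁻¹ • p) - f p t • (t⁻¹ • B t)) := by
      rw [integral_sub hint1 hint2, integral_smul_const, hmass_t, one_smul]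
    rw [heq]
    have hbound : ∀ p, ‖f p t • ((∑ i, p i)⁻¹ • p) - f p t • (t⁻¹ • B t)‖ ≤ f p t * (M/t) := by
      intro p
      rcases eq_or_ne (f p t) 0 with h | h
      · simp [h]
      · rw [← smul_sub, norm_smul, Real.norm_eq_abs, abs_of_nonneg (hfnn p t)]
        exact mul_le_mul_of_nonneg_left (hkey t ht p h) (hfnn p t)
    have hnle := norm_integral_le_of_norm_le ((hfint t).mul_const (M/t))
      (Filter.Eventually.of_forall hbound)
    refine hnle.trans ?_
    rw [MeasureTheory.integral_mul_const, hmass_t, one_mul]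
  -- limits
  have hMt : Tendsto (fun t : ℝ => M / t) atTop (𝓝 0) :=
    Tendsto.div_atTop tendsto_const_nhds tendsto_id
  have hdiff : Tendsto
      (fun t => (∫ p, f p t • ((∑ i, p i)⁻¹ • p)) - t⁻¹ • B t) atTop (𝓝 0) :=
    squeeze_zero_norm' (by filter_upwards [eventually_gt_atTop (0:ℝ)] with t ht using hPb t ht) hMt
  have hβ : Tendsto (fun t => t⁻¹ • B t) atTop (𝓝 P0) := by
    have h := hP.sub hdiff
    have heq : (fun t => (∫ p, f p t • ((∑ i, p i)⁻¹ • p))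
        - ((∫ p, f p t • ((∑ i, p i)⁻¹ • p)) - t⁻¹ • B t)) = fun t => t⁻¹ • B t := by
      funext t; abel
    rw [heq, sub_zero] at h
    exact h
  -- choose the threshold
  have hev1 : ∀ᶠ t in atTop, ‖t⁻¹ • B t - P0‖ < ε/2 := by
    have := Metric.tendsto_nhds.mp hβ (ε/2) (by positivity)
    filter_upwards [this] with t ht
    rwa [dist_eq_norm] at ht
  have hev2 : ∀ᶠ t in atTop, M / t < ε/2 := hMt.eventually (gt_mem_nhds (by positivity))
  obtain ⟨T, hT⟩ := ((hev1.and hev2).and (eventually_gt_atTop (0:ℝ))).exists_forall_of_atTop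
  refine ⟨T, ?_⟩
  intro t ht p hp
  have hp' : f p t ≠ 0 := hp
  obtain ⟨⟨he1, he2⟩, htpos⟩ := hT t ht.le
  have hqK := hsupp_t t p hp'
  have hppos : ∀ i, 0 < p i := by
    intro i
    have h1 : 0 < (p - B t) i := hsupp hqK i
    have h2 : 0 ≤ B t i := hBnonneg t htpos.le i
    rw [hsub_apply] at h1
    linarith
  have hsum0 : 0 < ∑ i, p i := Finset.sum_pos (fun i _ => hppos i) Finset.univ_nonempty
  constructor
  · rw [Metric.mem_ball, dist_eq_norm]
    have htri : ‖(∑ i, p i)⁻¹ • p - P0‖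
        ≤ ‖(∑ i, p i)⁻¹ • p - t⁻¹ • B t‖ + ‖t⁻¹ • B t - P0‖ := by
      have := norm_add_le ((∑ i, p i)⁻¹ • p - t⁻¹ • B t) (t⁻¹ • B t - P0)
      rwa [sub_add_sub_cancel] at this
    have h3 : ‖(∑ i, p i)⁻¹ • p - t⁻¹ • B t‖ ≤ M / t := hkey t htpos p hp'
    calc ‖(∑ i, p i)⁻¹ • p - P0‖
        ≤ ‖(∑ i, p i)⁻¹ • p - t⁻¹ • B t‖ + ‖t⁻¹ • B t - P0‖ := htri
      _ < ε/2 + ε/2 := add_lt_add_of_le_of_lt (h3.trans he2.le) he1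
      _ = ε := add_halves ε
  · constructor
    · intro i
      have h : ((∑ i, p i)⁻¹ • p) i = (∑ i, p i)⁻¹ * p i := by simp [PiLp.smul_apply]
      rw [h]
      exact le_of_lt (mul_pos (inv_pos.mpr hsum0) (hppos i))
    · have hsmul : ∀ i, ((∑ j, p j)⁻¹ • p) i = (∑ j, p j)⁻¹ * p i := fun i => by simp [PiLp.smul_apply]
      calc ∑ i, ((∑ j, p j)⁻¹ • p) i = ∑ i, (∑ j, p j)⁻¹ * p i :=
            Finset.sum_congr rfl fun i _ => hsmul i
        _ = (∑ j, p j)⁻¹ * ∑ i, p i := by rw [Finset.mul_sum]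
        _ = 1 := inv_mul_cancel₀ (ne_of_gt hsum0)
end
end

section
/- Convergence to Nash equilibrium in fictitious play (Theorem 2, equilibrium part): Let f₀ be a continuous, nonnegative function with compact support contained in ℝ^d_{>0} and unit integral, let b̄ : [0,∞) → S_{d−1} be continuous, and let f(p,t) = f₀(p − ∫₀ᵗ b̄(τ)dτ) satisfy the consistency condition b̄(t) = ∫_{ℝ^d} b(p) f(p,t) dp for all t ≥ 0. Define P(t) = ∫_{ℝ^d} (p/Σ_i p_i) f(p,t) dp. Suppose P(t) → P₀ and b̄(t) → b₀ as t → ∞. Then b₀ = P₀ and P₀ ∈ BR(P₀); that is, the limit of the mean priors is a symmetric Nash equilibrium of the matrix game A. -/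
open MeasureTheory Filter Topology

noncomputable section

namespace NashAux

open scoped NNReal ENNReal


lemma cesaro_integral {F : Type*} [NormedAddCommGroup F] [NormedSpace ℝ F] [CompleteSpace F]
    {g : ℝ → F} (hg : ContinuousOn g (Set.Ici 0)) {l : F}
    (hl : Tendsto g atTop (𝓝 l)) :
    Tendsto (fun t => t⁻¹ • ∫ τ in (0:ℝ)..t, g τ) atTop (𝓝 l) := by
  have hint : ∀ a b : ℝ, 0 ≤ a → a ≤ b → IntervalIntegrable g volume a b := by
    intro a b ha hab
    apply ContinuousOn.intervalIntegrable
    rw [Set.uIcc_of_le hab]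
    exact hg.mono fun x hx => le_trans ha hx.1
  have hint' : ∀ a b : ℝ, 0 ≤ a → a ≤ b →
      IntervalIntegrable (fun τ => g τ - l) volume a b := fun a b ha hab =>
    (hint a b ha hab).sub intervalIntegrable_const
  rw [Metric.tendsto_atTop]
  intro ε hε
  obtain ⟨T₀, hT₀⟩ := (Metric.tendsto_atTop.mp hl) (ε/4) (by positivity)
  set T : ℝ := max T₀ 0 with hTdef
  have hT0 : 0 ≤ T := le_max_right _ _
  set C : ℝ := ‖∫ τ in (0:ℝ)..T, (g τ - l)‖ with hCdef
  have hC0 : 0 ≤ C := norm_nonneg _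
  refine ⟨max (T + 1) (4 * C / ε), fun t ht => ?_⟩
  have htT : T + 1 ≤ t := le_trans (le_max_left _ _) ht
  have htC : 4 * C / ε ≤ t := le_trans (le_max_right _ _) ht
  have ht0 : 0 < t := by linarith
  have hTt : T ≤ t := by linarith
  have hsplit : ∫ τ in (0:ℝ)..t, (g τ - l) =
      (∫ τ in (0:ℝ)..T, (g τ - l)) + ∫ τ in T..t, (g τ - l) :=
    (intervalIntegral.integral_add_adjacent_intervals (hint' 0 T le_rfl hT0)
      (hint' T t hT0 hTt)).symm
  have hkey : t⁻¹ • (∫ τ in (0:ℝ)..t, g τ) - l = t⁻¹ • ∫ τ in (0:ℝ)..t, (g τ - l) := by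
    rw [intervalIntegral.integral_sub (hint 0 t le_rfl ht0.le) intervalIntegrable_const,
      intervalIntegral.integral_const, smul_sub, sub_zero, smul_smul,
      inv_mul_cancel₀ ht0.ne', one_smul]
  have htail : ‖∫ τ in T..t, (g τ - l)‖ ≤ (ε/4) * |t - T| := by
    apply intervalIntegral.norm_integral_le_of_norm_le_const
    intro x hx
    rw [Set.uIoc_of_le hTt] at hx
    have : dist (g x) l < ε/4 := hT₀ x (le_trans (le_max_left _ _) hx.1.le)
    rw [← dist_eq_norm]
    exact this.le
  rw [dist_eq_norm, hkey, hsplit, smul_add]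
  calc ‖t⁻¹ • (∫ τ in (0:ℝ)..T, (g τ - l)) + t⁻¹ • ∫ τ in T..t, (g τ - l)‖
      ≤ ‖t⁻¹ • (∫ τ in (0:ℝ)..T, (g τ - l))‖ + ‖t⁻¹ • ∫ τ in T..t, (g τ - l)‖ :=
        norm_add_le _ _
    _ ≤ t⁻¹ * C + t⁻¹ * ((ε/4) * |t - T|) := by
        rw [norm_smul, norm_smul, Real.norm_eq_abs, abs_of_pos (inv_pos.mpr ht0)]
        exact add_le_add le_rfl (mul_le_mul_of_nonneg_left htail (by positivity))
    _ < ε := by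
        rw [abs_of_nonneg (by linarith)]
        have h1 : t⁻¹ * C < ε/2 := by
          rw [inv_mul_lt_iff₀ ht0]
          have : 4 * C ≤ ε * t := by
            rw [div_le_iff₀ hε] at htC; linarith [htC]
          nlinarith
        have h2 : t⁻¹ * ((ε/4) * (t - T)) ≤ ε/4 := by
          rw [inv_mul_le_iff₀ ht0]
          nlinarith
        linarith



variable {d : ℕ}

lemma continuous_payoff (A : Matrix (Fin d) (Fin d) ℝ) (i : Fin d) :
    Continuous fun x : E d => payoff A x i := by
  unfold payoff
  exact continuous_finset_sum _ fun k _ => continuous_const.mul ((EuclideanSpace.proj k).continuous)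

lemma measurable_hat : Measurable (fun p : E d => (∑ i, p i)⁻¹ • p) := by
  have h1 : Measurable (fun p : E d => (∑ i, p i)⁻¹) :=
    measurable_inv.comp (continuous_finset_sum _ fun k _ => (EuclideanSpace.proj k).continuous).measurable
  exact h1.smul measurable_id

lemma measurableSet_argmax_eq (A : Matrix (Fin d) (Fin d) ℝ) (S : Finset (Fin d)) :
    MeasurableSet {x : E d | argmaxSet A x = S} := by
  have : {x : E d | argmaxSet A x = S} =
      ⋂ i, {x : E d | (∀ j, payoff A x j ≤ payoff A x i) ↔ i ∈ S} := by
    ext x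
    simp only [Set.mem_setOf_eq, Set.mem_iInter, Finset.ext_iff, argmaxSet, Finset.mem_filter,
      Finset.mem_univ, true_and]
  rw [this]
  refine MeasurableSet.iInter fun i => ?_
  have hmeas : MeasurableSet (⋂ j, {x : E d | payoff A x j ≤ payoff A x i}) :=
    MeasurableSet.iInter fun j =>
      measurableSet_le (continuous_payoff A j).measurable (continuous_payoff A i).measurable
  by_cases hi : i ∈ S
  · have he : {x : E d | (∀ j, payoff A x j ≤ payoff A x i) ↔ i ∈ S}
        = ⋂ j, {x : E d | payoff A x j ≤ payoff A x i} := by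
      ext x; simp [hi]
    rw [he]; exact hmeas
  · have he : {x : E d | (∀ j, payoff A x j ≤ payoff A x i) ↔ i ∈ S}
        = (⋂ j, {x : E d | payoff A x j ≤ payoff A x i})ᶜ := by
      ext x; simp [hi]
    rw [he]; exact hmeas.compl

lemma measurable_brSel (A : Matrix (Fin d) (Fin d) ℝ) : Measurable (brSel A (d := d)) := by
  have hrepr : brSel A (d := d) = fun p => ∑ S : Finset (Fin d),
      Set.indicator {q : E d | argmaxSet A ((∑ i, q i)⁻¹ • q) = S}
        (fun _ => ((S.card : ℝ)⁻¹ • ∑ i ∈ S, EuclideanSpace.single i (1:ℝ))) p := by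
    funext p
    rw [Fintype.sum_eq_single (argmaxSet A ((∑ i, p i)⁻¹ • p))]
    · rw [Set.indicator_of_mem (by simp)]
      rfl
    · intro S hS
      exact Set.indicator_of_notMem (by simpa using (Ne.symm hS)) _
  rw [hrepr]
  refine Finset.measurable_sum _ fun S _ => ?_
  have : MeasurableSet {q : E d | argmaxSet A ((∑ i, q i)⁻¹ • q) = S} :=
    measurable_hat (measurableSet_argmax_eq A S)
  exact measurable_const.indicator this

lemma norm_brSel_le (A : Matrix (Fin d) (Fin d) ℝ) (p : E d) : ‖brSel A p‖ ≤ 1 := by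
  unfold brSel
  set S := argmaxSet A ((∑ i, p i)⁻¹ • p) with hS
  rcases S.eq_empty_or_nonempty with h | h
  · simp [h]
  · have hcard : (0:ℝ) < S.card := by exact_mod_cast Finset.card_pos.mpr h
    rw [norm_smul]
    have h2 : ‖∑ i ∈ S, EuclideanSpace.single i (1:ℝ)‖ ≤ (S.card : ℝ) := by
      calc ‖∑ i ∈ S, EuclideanSpace.single i (1:ℝ)‖
          ≤ ∑ i ∈ S, ‖EuclideanSpace.single i (1:ℝ)‖ := norm_sum_le _ _
        _ = (S.card : ℝ) := by simp [EuclideanSpace.norm_single]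
    calc ‖((S.card : ℝ)⁻¹)‖ * ‖∑ i ∈ S, EuclideanSpace.single i (1:ℝ)‖
        ≤ (S.card : ℝ)⁻¹ * (S.card : ℝ) := by
          rw [Real.norm_eq_abs, abs_of_nonneg (by positivity)]
          exact mul_le_mul_of_nonneg_left h2 (by positivity)
      _ = 1 := by field_simp

lemma norm_le_one_of_mem_simplex {x : E d} (hx : x ∈ simplex d) : ‖x‖ ≤ 1 := by
  obtain ⟨hx0, hx1⟩ := hx
  have hle : ∀ i, x i ≤ 1 := by
    intro i
    rw [← hx1]
    exact Finset.single_le_sum (fun j _ => hx0 j) (Finset.mem_univ i)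
  rw [EuclideanSpace.norm_eq]
  rw [show (1:ℝ) = Real.sqrt 1 from Real.sqrt_one.symm]
  apply Real.sqrt_le_sqrt
  calc ∑ i, ‖x i‖ ^ 2 = ∑ i, (x i) ^ 2 := by
        simp [Real.norm_eq_abs, sq_abs]
    _ ≤ ∑ i, x i := Finset.sum_le_sum fun i _ => by nlinarith [hx0 i, hle i]
    _ = 1 := hx1


lemma eventually_argmax_subset (A : Matrix (Fin d) (Fin d) ℝ) (P0 : E d) :
    ∀ᶠ x in 𝓝 P0, argmaxSet A x ⊆ argmaxSet A P0 := by
  have hkey : ∀ j : Fin d, ∀ᶠ x in 𝓝 P0, j ∉ argmaxSet A P0 → j ∉ argmaxSet A x := by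
    intro j
    by_cases hj : j ∈ argmaxSet A P0
    · exact Filter.Eventually.of_forall fun x h => absurd hj h
    · simp only [argmaxSet, Finset.mem_filter, Finset.mem_univ, true_and, not_forall,
        not_le] at hj
      obtain ⟨k, hk⟩ := hj
      have hev : ∀ᶠ x in 𝓝 P0, payoff A x j < payoff A x k :=
        ((continuous_payoff A j).tendsto P0).eventually_lt
          ((continuous_payoff A k).tendsto P0) hk
      filter_upwards [hev] with x hx
      intro _ hmem
      simp only [argmaxSet, Finset.mem_filter, Finset.mem_univ, true_and] at hmem
      exact absurd (hmem k) (not_le.mpr hx)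
  have hall : ∀ᶠ x in 𝓝 P0, ∀ j : Fin d, j ∉ argmaxSet A P0 → j ∉ argmaxSet A x :=
    Filter.eventually_all.mpr hkey
  filter_upwards [hall] with x hx
  intro j hjx
  by_contra hjP
  exact hx j hjP hjx

lemma brSel_mem (A : Matrix (Fin d) (Fin d) ℝ) (hd : 1 ≤ d) {p : E d} {M : Finset (Fin d)}
    (hsub : argmaxSet A ((∑ i, p i)⁻¹ • p) ⊆ M) :
    brSel A p ∈ convexHull ℝ {x : E d | ∃ i ∈ M, x = EuclideanSpace.single i (1:ℝ)} := by
  classical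
  set S := argmaxSet A ((∑ i, p i)⁻¹ • p) with hSdef
  have hS : S.Nonempty := by
    have : Nonempty (Fin d) := ⟨⟨0, hd⟩⟩
    obtain ⟨i, _, hi⟩ := Finset.exists_max_image Finset.univ
      (payoff A ((∑ i, p i)⁻¹ • p)) Finset.univ_nonempty
    refine ⟨i, ?_⟩
    simp only [hSdef, argmaxSet, Finset.mem_filter, Finset.mem_univ, true_and]
    exact fun j => hi j (Finset.mem_univ j)
  have hcard : (0:ℝ) < S.card := by exact_mod_cast Finset.card_pos.mpr hS
  have hrepr : brSel A p =
      S.centerMass (fun _ => (1:ℝ)) (fun i => EuclideanSpace.single i (1:ℝ)) := by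
    rw [Finset.centerMass]
    simp [brSel, ← hSdef]
  rw [hrepr]
  exact Finset.centerMass_mem_convexHull S (fun i _ => zero_le_one)
    (by simpa using hcard) (fun i hi => ⟨i, hsub hi, rfl⟩)

lemma coord_le_norm (q : E d) (i : Fin d) : |q i| ≤ ‖q‖ := by
  rw [EuclideanSpace.norm_eq, show |q i| = Real.sqrt (q i ^ 2) from (Real.sqrt_sq_eq_abs _).symm]
  apply Real.sqrt_le_sqrt
  have := Finset.single_le_sum (f := fun j => ‖q j‖ ^ 2) (fun j _ => by positivity)
    (Finset.mem_univ i)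
  simpa [Real.norm_eq_abs, sq_abs] using this

theorem main_aux {d : ℕ} (hd : 1 ≤ d)
    (A : Matrix (Fin d) (Fin d) ℝ)
    (f0 : E d → ℝ) (hf0c : Continuous f0) (hpos : ∀ p, 0 ≤ f0 p)
    (hcs : HasCompactSupport f0) (hsupp : tsupport f0 ⊆ {p : E d | ∀ i, 0 < p i})
    (hmass : (∫ p, f0 p) = 1)
    (B : ℝ → E d)
    (hBsum : ∀ t : ℝ, 0 ≤ t → ∑ i, B t i = t)
    (hBnorm : ∀ t : ℝ, 0 ≤ t → ‖B t‖ ≤ t)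
    (bbar : ℝ → E d)
    (hcons : ∀ t : ℝ, 0 ≤ t → bbar t = ∫ p, f0 (p - B t) • brSel A p)
    (P0 b0 : E d)
    (hP : Tendsto (fun t => ∫ p, f0 (p - B t) • ((∑ i, p i)⁻¹ • p)) atTop (𝓝 P0))
    (hb0 : Tendsto bbar atTop (𝓝 b0))
    (hBavg : Tendsto (fun t => t⁻¹ • B t) atTop (𝓝 b0)) :
    b0 = P0 ∧ P0 ∈ BRset A P0 := by
  classical
  haveI : Nonempty (Fin d) := ⟨⟨0, hd⟩⟩
  set K : Set (E d) := tsupport f0 with hKdef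
  have hKc : IsCompact K := hcs
  -- bound on K
  obtain ⟨r, hr⟩ := hKc.isBounded.subset_closedBall 0
  set R : ℝ := max r 1 with hRdef
  have hR1 : (1:ℝ) ≤ R := le_max_right _ _
  have hR0 : (0:ℝ) < R := by linarith
  have hRK : ∀ q ∈ K, ‖q‖ ≤ R := by
    intro q hq
    have := hr hq
    rw [Metric.mem_closedBall, dist_zero_right] at this
    exact le_trans this (le_max_left _ _)
  have hsumK : ∀ q ∈ K, 0 < ∑ i, q i ∧ ∑ i, q i ≤ d * R := by
    intro q hq
    constructor
    · exact Finset.sum_pos (fun i _ => hsupp hq i) Finset.univ_nonempty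
    · calc ∑ i, q i ≤ ∑ _i : Fin d, R :=
            Finset.sum_le_sum fun i _ => le_trans (le_abs_self _)
              (le_trans (coord_le_norm q i) (hRK q hq))
        _ = d * R := by simp [Finset.card_univ, mul_comm]
  set C : ℝ := R + d * R with hCdef
  have hC0 : 0 < C := by positivity
  -- shifted sums
  have hsum_shift : ∀ (q : E d) (t : ℝ), 0 ≤ t → ∑ i, (q + B t) i = ∑ i, q i + t := by
    intro q t ht
    have : ∑ i, (q + B t) i = ∑ i, (q i + B t i) := by
      apply Finset.sum_congr rfl
      intro i _
      simp [PiLp.add_apply]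
    rw [this, Finset.sum_add_distrib, hBsum t ht]
  -- the key uniform estimate
  have hEst : ∀ t : ℝ, 1 ≤ t → ∀ q ∈ K,
      ‖(∑ i, q i + t)⁻¹ • (q + B t) - t⁻¹ • B t‖ ≤ C / t := by
    intro t ht q hq
    have ht0 : (0:ℝ) < t := by linarith
    obtain ⟨hs0, hsR⟩ := hsumK q hq
    have hst : 0 < ∑ i, q i + t := by linarith
    have key : (∑ i, q i + t)⁻¹ • (q + B t) - t⁻¹ • B t
        = (∑ i, q i + t)⁻¹ • q + ((∑ i, q i + t)⁻¹ - t⁻¹) • B t := by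
      rw [smul_add, sub_smul]; abel
    rw [key]
    have hinvle : (∑ i, q i + t)⁻¹ ≤ t⁻¹ := by
      apply inv_anti₀ ht0; linarith
    have h1 : ‖(∑ i, q i + t)⁻¹ • q‖ ≤ R / t := by
      rw [norm_smul, Real.norm_eq_abs, abs_of_pos (inv_pos.mpr hst)]
      calc (∑ i, q i + t)⁻¹ * ‖q‖ ≤ t⁻¹ * R :=
            mul_le_mul hinvle (hRK q hq) (norm_nonneg _) (by positivity)
        _ = R / t := by rw [div_eq_inv_mul]
    have h2 : ‖((∑ i, q i + t)⁻¹ - t⁻¹) • B t‖ ≤ d * R / t := by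
      rw [norm_smul, Real.norm_eq_abs, abs_of_nonpos (by linarith), neg_sub]
      calc (t⁻¹ - (∑ i, q i + t)⁻¹) * ‖B t‖
          ≤ (t⁻¹ - (∑ i, q i + t)⁻¹) * t :=
            mul_le_mul_of_nonneg_left (hBnorm t ht0.le) (by linarith)
        _ = (∑ i, q i) / (∑ i, q i + t) := by field_simp; ring
        _ ≤ (∑ i, q i) / t := by
            apply div_le_div_of_nonneg_left hs0.le ht0 ?_  -- careful
            linarith
        _ ≤ d * R / t := by gcongr
    calc ‖(∑ i, q i + t)⁻¹ • q + ((∑ i, q i + t)⁻¹ - t⁻¹) • B t‖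
        ≤ ‖(∑ i, q i + t)⁻¹ • q‖ + ‖((∑ i, q i + t)⁻¹ - t⁻¹) • B t‖ := norm_add_le _ _
      _ ≤ R / t + d * R / t := add_le_add h1 h2
      _ = C / t := by rw [hCdef]; ring
  -- the probability measure with density f0
  set μ : Measure (E d) := volume.withDensity fun q => ((Real.toNNReal (f0 q) : ℝ≥0) : ℝ≥0∞)
    with hμdef
  have hmeasd : Measurable fun q : E d => Real.toNNReal (f0 q) :=
    measurable_real_toNNReal.comp hf0c.measurable
  have hmeasd' : Measurable fun q : E d => ((Real.toNNReal (f0 q) : ℝ≥0) : ℝ≥0∞) :=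
    measurable_coe_nnreal_ennreal.comp hmeasd
  have hf0int : Integrable f0 := hf0c.integrable_of_hasCompactSupport hcs
  have hcoe : (fun q : E d => ((Real.toNNReal (f0 q) : ℝ≥0) : ℝ)) = f0 :=
    funext fun q => Real.coe_toNNReal _ (hpos q)
  haveI hprob : IsProbabilityMeasure μ := by
    constructor
    rw [hμdef, withDensity_apply _ MeasurableSet.univ, setLIntegral_univ,
      lintegral_coe_eq_integral _ (by rw [hcoe]; exact hf0int), hcoe, hmass,
      ENNReal.ofReal_one]
  have hae : ∀ᵐ q ∂μ, q ∈ K := by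
    rw [hμdef, ae_withDensity_iff hmeasd']
    refine Filter.Eventually.of_forall fun q hq => ?_
    have hne : f0 q ≠ 0 := by
      intro h
      apply hq
      simp [h]
    exact subset_tsupport _ hne
  -- bridging identity
  have hbridge : ∀ (g : E d → E d) (t : ℝ),
      (∫ p, f0 (p - B t) • g p) = ∫ q, g (q + B t) ∂μ := by
    intro g t
    rw [hμdef, integral_withDensity_eq_integral_smul hmeasd (fun q => g (q + B t)),
      ← integral_add_right_eq_self (fun p => f0 (p - B t) • g p) (B t)]
    congr 1
    funext q
    rw [add_sub_cancel_right, NNReal.smul_def, Real.coe_toNNReal _ (hpos q)]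
  -- Step 1: the mean prior tends to b0
  have hPalt : ∀ t : ℝ, (∫ p, f0 (p - B t) • ((∑ i, p i)⁻¹ • p))
      = ∫ q, (∑ i, (q + B t) i)⁻¹ • (q + B t) ∂μ := fun t =>
    hbridge (fun p => (∑ i, p i)⁻¹ • p) t
  have hIntHat : ∀ t : ℝ, 1 ≤ t →
      Integrable (fun q => (∑ i, (q + B t) i)⁻¹ • (q + B t)) μ := by
    intro t ht
    have ht0 : (0:ℝ) < t := by linarith
    refine Integrable.mono' (integrable_const (R + 1)) ?_ ?_
    · apply Measurable.aestronglyMeasurable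
      have hc : Continuous fun q : E d => ∑ i, (q + B t) i :=
        continuous_finset_sum _ fun i _ =>
          (EuclideanSpace.proj i).continuous.comp (continuous_id.add continuous_const)
      exact (hc.measurable.inv).smul (measurable_id.add_const (B t))
    · filter_upwards [hae] with q hq
      rw [hsum_shift q t ht0.le]
      obtain ⟨hs0, _⟩ := hsumK q hq
      have hst : 0 < ∑ i, q i + t := by linarith
      rw [norm_smul, Real.norm_eq_abs, abs_of_pos (inv_pos.mpr hst)]
      have hn : ‖q + B t‖ ≤ R + t :=
        le_trans (norm_add_le _ _) (add_le_add (hRK q hq) (hBnorm t ht0.le))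
      have hinv : (∑ i, q i + t)⁻¹ ≤ t⁻¹ := inv_anti₀ ht0 (by linarith)
      calc (∑ i, q i + t)⁻¹ * ‖q + B t‖ ≤ t⁻¹ * (R + t) :=
            mul_le_mul hinv hn (norm_nonneg _) (by positivity)
        _ = R / t + 1 := by field_simp
        _ ≤ R + 1 := by
            have : R / t ≤ R := by
              rw [div_le_iff₀ ht0]; nlinarith
            linarith
  have hdiff : ∀ t : ℝ, 1 ≤ t →
      ‖(∫ p, f0 (p - B t) • ((∑ i, p i)⁻¹ • p)) - t⁻¹ • B t‖ ≤ C / t := by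
    intro t ht
    have ht0 : (0:ℝ) < t := by linarith
    rw [hPalt t]
    have hconst : t⁻¹ • B t = ∫ _q, t⁻¹ • B t ∂μ := by
      rw [integral_const, probReal_univ, one_smul]
    rw [hconst, ← integral_sub (hIntHat t ht) (integrable_const _)]
    calc ‖∫ q, ((∑ i, (q + B t) i)⁻¹ • (q + B t) - t⁻¹ • B t) ∂μ‖
        ≤ ∫ _q, C / t ∂μ := by
          apply norm_integral_le_of_norm_le (integrable_const _)
          filter_upwards [hae] with q hq
          rw [hsum_shift q t ht0.le]
          exact hEst t ht q hq
      _ = C / t := by rw [integral_const, probReal_univ, one_smul]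
  have hCt : Tendsto (fun t : ℝ => C / t) atTop (𝓝 0) :=
    tendsto_const_nhds.div_atTop tendsto_id
  have hsub0 : Tendsto
      (fun t => (∫ p, f0 (p - B t) • ((∑ i, p i)⁻¹ • p)) - t⁻¹ • B t) atTop (𝓝 0) := by
    apply squeeze_zero_norm' ?_ hCt
    filter_upwards [eventually_ge_atTop (1:ℝ)] with t ht
    exact hdiff t ht
  have hPb0 : Tendsto (fun t => ∫ p, f0 (p - B t) • ((∑ i, p i)⁻¹ • p)) atTop (𝓝 b0) := by
    have := hsub0.add hBavg
    simpa using this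
  have hb0P0 : b0 = P0 := tendsto_nhds_unique hPb0 hP
  refine ⟨hb0P0, ?_⟩
  -- Step 2: membership in the best-response set
  have hS0fin : ({x : E d | ∃ i ∈ argmaxSet A P0, x = EuclideanSpace.single i (1:ℝ)}).Finite :=
    Set.Finite.subset (Set.finite_range fun i : Fin d => EuclideanSpace.single i (1:ℝ))
      (by rintro x ⟨i, _, rfl⟩; exact Set.mem_range_self i)
  have hclosed : IsClosed (BRset A P0) := hS0fin.isClosed_convexHull ℝ
  have hconvex : Convex ℝ (BRset A P0) := convex_convexHull ℝ _
  obtain ⟨δ, hδpos, hδ⟩ := Metric.eventually_nhds_iff.mp (eventually_argmax_subset A P0)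
  have hev : ∀ᶠ t : ℝ in atTop, bbar t ∈ BRset A P0 := by
    have hev1 : ∀ᶠ t : ℝ in atTop, C / t < δ / 2 :=
      hCt.eventually_lt_const (by positivity)
    have hBavg' : Tendsto (fun t => t⁻¹ • B t) atTop (𝓝 P0) := hb0P0 ▸ hBavg
    have hev2 : ∀ᶠ t : ℝ in atTop, dist (t⁻¹ • B t) P0 < δ / 2 :=
      (Metric.tendsto_nhds.mp hBavg') (δ/2) (by positivity)
    filter_upwards [hev1, hev2, eventually_ge_atTop (1:ℝ)] with t h1 h2 ht
    have ht0 : (0:ℝ) ≤ t := by linarith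
    rw [hcons t ht0, hbridge]
    apply hconvex.integral_mem hclosed
    · filter_upwards [hae] with q hq
      have hdist : dist ((∑ i, (q + B t) i)⁻¹ • (q + B t)) P0 < δ := by
        rw [hsum_shift q t ht0]
        calc dist ((∑ i, q i + t)⁻¹ • (q + B t)) P0
            ≤ dist ((∑ i, q i + t)⁻¹ • (q + B t)) (t⁻¹ • B t) + dist (t⁻¹ • B t) P0 :=
              dist_triangle _ _ _
          _ < δ/2 + δ/2 := add_lt_add_of_le_of_lt
              (by rw [dist_eq_norm]; exact le_trans (hEst t ht q hq) h1.le) h2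
          _ = δ := by ring
      have hsub := hδ hdist
      show brSel A (q + B t) ∈ BRset A P0
      unfold BRset
      exact brSel_mem A hd hsub
    · refine Integrable.mono' (integrable_const 1) ?_
        (Filter.Eventually.of_forall fun q => norm_brSel_le A _)
      exact ((measurable_brSel A).comp (measurable_id.add_const (B t))).aestronglyMeasurable
  have hmem : b0 ∈ BRset A P0 := hclosed.mem_of_tendsto hb0 hev
  rwa [hb0P0] at hmem

end NashAux

/-- Convergence to Nash equilibrium in fictitious play
(Theorem 2, equilibrium part). -/
theorem convergence_to_nash (d : ℕ) (hd : 1 ≤ d)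
    (A : Matrix (Fin d) (Fin d) ℝ) (hA : ∀ i j, 0 ≤ A i j)
    (f0 : E d → ℝ) (hf0c : Continuous f0) (hpos : ∀ p, 0 ≤ f0 p)
    (hcs : HasCompactSupport f0) (hsupp : tsupport f0 ⊆ {p : E d | ∀ i, 0 < p i})
    (hmass : (∫ p, f0 p) = 1)
    (bbar : ℝ → E d) (hb : ContinuousOn bbar (Set.Ici 0))
    (hbS : ∀ t : ℝ, 0 ≤ t → bbar t ∈ simplex d)
    (f : E d → ℝ → ℝ)
    (hf : ∀ p t, f p t = f0 (p - ∫ τ in (0:ℝ)..t, bbar τ))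
    (hcons : ∀ t : ℝ, 0 ≤ t → bbar t = ∫ p, f p t • brSel A p)
    (P0 b0 : E d)
    (hP : Tendsto (fun t => ∫ p, f p t • ((∑ i, p i)⁻¹ • p)) atTop (𝓝 P0))
    (hb0 : Tendsto bbar atTop (𝓝 b0)) :
    b0 = P0 ∧ P0 ∈ BRset A P0 := by
  classical
  have hint : ∀ a b : ℝ, 0 ≤ a → a ≤ b → IntervalIntegrable bbar volume a b := by
    intro a b ha hab
    apply ContinuousOn.intervalIntegrable
    rw [Set.uIcc_of_le hab]
    exact hb.mono fun x hx => le_trans ha hx.1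
  have hBsum : ∀ t : ℝ, 0 ≤ t → ∑ i, (∫ τ in (0:ℝ)..t, bbar τ) i = t := by
    intro t ht
    have hcomp : ∀ i : Fin d, IntervalIntegrable (fun τ => bbar τ i) volume 0 t := by
      intro i
      apply ContinuousOn.intervalIntegrable
      rw [Set.uIcc_of_le ht]
      exact ((EuclideanSpace.proj (𝕜 := ℝ) i).continuous.comp_continuousOn hb).mono
        fun x hx => hx.1
    have hcoord : ∀ i : Fin d, (∫ τ in (0:ℝ)..t, bbar τ) i = ∫ τ in (0:ℝ)..t, bbar τ i := by
      intro i
      exact ((EuclideanSpace.proj (𝕜 := ℝ) i).intervalIntegral_comp_comm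
        (hint 0 t le_rfl ht)).symm
    rw [Finset.sum_congr rfl fun i _ => hcoord i,
      ← intervalIntegral.integral_finset_sum (fun i _ => hcomp i)]
    have heq : Set.EqOn (fun τ => ∑ i, bbar τ i) (fun _ => (1:ℝ)) (Set.uIcc 0 t) := by
      intro τ hτ
      rw [Set.uIcc_of_le ht] at hτ
      exact (hbS τ hτ.1).2
    rw [intervalIntegral.integral_congr heq, intervalIntegral.integral_const, smul_eq_mul,
      sub_zero, mul_one]
  have hBnorm : ∀ t : ℝ, 0 ≤ t → ‖∫ τ in (0:ℝ)..t, bbar τ‖ ≤ t := by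
    intro t ht
    have h := intervalIntegral.norm_integral_le_of_norm_le_const (C := 1) (f := bbar)
      (a := 0) (b := t) ?_
    · simpa [abs_of_nonneg ht] using h
    · intro x hx
      rw [Set.uIoc_of_le ht] at hx
      exact NashAux.norm_le_one_of_mem_simplex (hbS x hx.1.le)
  refine NashAux.main_aux hd A f0 hf0c hpos hcs hsupp hmass
    (fun t => ∫ τ in (0:ℝ)..t, bbar τ) hBsum hBnorm bbar ?_ P0 b0 ?_ hb0
    (NashAux.cesaro_integral hb hb0)
  · intro t ht
    rw [hcons t ht]
    simp only [hf]
  · simpa only [hf] using hP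
end
end

section
/- Shrinking of radial projections of distant balls (key geometric step of Theorem 2): For every r > 0 and every ε > 0 there exists R > 0 such that for every c ∈ ℝ^d_+ with Euclidean norm |c| ≥ R and all points p, q in the ball B_r(c) having all coordinates strictly positive, one has |p/Σ_i p_i − q/Σ_i q_i| ≤ ε. In particular, if a family of compact sets K_t ⊂ ℝ^d_{>0} satisfies K_t ⊂ B_r(c(t)) with |c(t)| → ∞ as t → ∞, then the diameter of the radial projection {p/Σ_i p_i : p ∈ K_t} onto S_{d−1} tends to zero. -/
open MeasureTheory Filter Topology

noncomputable section

lemma sum_le_sqrt_mul_norm {d : ℕ} (v : E d) : |∑ i, v i| ≤ Real.sqrt d * ‖v‖ := by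
  let ones : E d := WithLp.toLp 2 (fun _ => 1)
  have h1 : (∑ i, v i) = (inner ℝ ones v : ℝ) := by
    rw [PiLp.inner_apply]
    simp [RCLike.inner_apply, ones]
  have h2 : ‖ones‖ = Real.sqrt d := by
    rw [EuclideanSpace.norm_eq]
    simp [ones]
  rw [h1]
  calc |(inner ℝ ones v : ℝ)| ≤ ‖ones‖ * ‖v‖ := abs_real_inner_le_norm _ _
    _ = Real.sqrt d * ‖v‖ := by rw [h2]

lemma norm_le_sum {d : ℕ} (c : E d) (hc : ∀ i, 0 ≤ c i) : ‖c‖ ≤ ∑ i, c i := by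
  rw [EuclideanSpace.norm_eq]
  have h1 : ∑ i, ‖c i‖ ^ 2 ≤ (∑ i, c i) ^ 2 := by
    have := Finset.sum_sq_le_sq_sum_of_nonneg (s := Finset.univ) (f := fun i => c i)
      (fun i _ => hc i)
    simpa [Real.norm_eq_abs, sq_abs] using this
  calc Real.sqrt (∑ i, ‖c i‖ ^ 2) ≤ Real.sqrt ((∑ i, c i) ^ 2) := Real.sqrt_le_sqrt h1
    _ = ∑ i, c i := Real.sqrt_sq (Finset.sum_nonneg fun i _ => hc i)

lemma key (d : ℕ) (hd : 1 ≤ d) :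
    ∀ r > (0:ℝ), ∀ ε > (0:ℝ), ∃ R > (0:ℝ), ∀ c : E d, (∀ i, 0 ≤ c i) → R ≤ ‖c‖ →
      ∀ p ∈ Metric.closedBall c r, ∀ q ∈ Metric.closedBall c r,
        (∀ i, 0 < p i) → (∀ i, 0 < q i) →
        ‖(∑ i, p i)⁻¹ • p - (∑ i, q i)⁻¹ • q‖ ≤ ε := by
  intro r hr ε hε
  set M := Real.sqrt d with hM
  have hM1 : 1 ≤ M := by
    rw [hM]
    rw [show (1:ℝ) = Real.sqrt 1 by simp]
    exact Real.sqrt_le_sqrt (by exact_mod_cast hd)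
  refine ⟨2*M*r + r + (4*r + 16*M*r)/ε + 1, by positivity, ?_⟩
  intro c hc hR p hp q hq hppos hqpos
  set L := ‖c‖ with hLdef
  have hL0 : 0 < L := lt_of_lt_of_le (by positivity) hR
  have hL2Mr : 2*M*r ≤ L := by
    have : 0 ≤ (4*r + 16*M*r)/ε := by positivity
    linarith
  have hrL : r ≤ L := by nlinarith
  have hsum : ∀ x : E d, dist x c ≤ r → L/2 ≤ ∑ i, x i := by
    intro x hx
    have h1 : |∑ i, (x - c) i| ≤ M * ‖x - c‖ := sum_le_sqrt_mul_norm (x - c)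
    have h1' : |∑ i, x i - ∑ i, c i| ≤ M * ‖x - c‖ := by
      have : ∑ i, (x - c) i = ∑ i, x i - ∑ i, c i := by
        simp [Finset.sum_sub_distrib]
      rwa [this] at h1
    have h2 : L ≤ ∑ i, c i := norm_le_sum c hc
    have hxc : ‖x - c‖ ≤ r := by rwa [← dist_eq_norm]
    have h3 : M * ‖x - c‖ ≤ M * r := by nlinarith [norm_nonneg (x - c)]
    have h4 := abs_le.mp h1'
    linarith [h4.1]
  have hSp := hsum p hp
  have hSq := hsum q hq
  set Sp := ∑ i, p i with hSpdef
  set Sq := ∑ i, q i with hSqdef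
  have hSp0 : 0 < Sp := lt_of_lt_of_le (by positivity) hSp
  have hSq0 : 0 < Sq := lt_of_lt_of_le (by positivity) hSq
  -- bound ‖p - q‖ and |Sq - Sp|
  have hpq : ‖p - q‖ ≤ 2*r := by
    have := dist_triangle p c q
    rw [← dist_eq_norm]
    have h1 : dist p c ≤ r := hp
    have h2 : dist c q ≤ r := by rw [dist_comm]; exact hq
    linarith
  have hSpq : |Sq - Sp| ≤ 2*M*r := by
    have h1 : |∑ i, (q - p) i| ≤ M * ‖q - p‖ := sum_le_sqrt_mul_norm (q - p)
    have h2 : ∑ i, (q - p) i = Sq - Sp := by simp [hSpdef, hSqdef, Finset.sum_sub_distrib]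
    have h3 : ‖q - p‖ = ‖p - q‖ := by rw [norm_sub_rev]
    rw [h2, h3] at h1
    nlinarith
  clear_value L Sp Sq
  have hqnorm : ‖q‖ ≤ 2*L := by
    have h1 : ‖q‖ ≤ ‖q - c‖ + ‖c‖ := by
      calc ‖q‖ = ‖(q - c) + c‖ := by rw [sub_add_cancel]
        _ ≤ ‖q - c‖ + ‖c‖ := norm_add_le _ _
    have h2 : ‖q - c‖ ≤ r := by rw [← dist_eq_norm]; exact hq
    linarith
  -- decomposition
  have hdec : Sp⁻¹ • p - Sq⁻¹ • q = Sp⁻¹ • (p - q) + (Sp⁻¹ - Sq⁻¹) • q := by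
    module
  have hterm1 : ‖Sp⁻¹ • (p - q)‖ ≤ (2/L) * (2*r) := by
    rw [norm_smul, Real.norm_eq_abs, abs_of_pos (inv_pos.mpr hSp0)]
    have h1 : Sp⁻¹ ≤ 2/L := by
      have h2 : Sp⁻¹ ≤ (L/2)⁻¹ := by
        apply inv_anti₀ (by positivity) hSp
      calc Sp⁻¹ ≤ (L/2)⁻¹ := h2
        _ = 2/L := by field_simp
    nlinarith [norm_nonneg (p - q), inv_pos.mpr hSp0]
  have hterm2 : ‖(Sp⁻¹ - Sq⁻¹) • q‖ ≤ (8*M*r/L^2) * (2*L) := by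
    rw [norm_smul, Real.norm_eq_abs]
    have habs : |Sp⁻¹ - Sq⁻¹| ≤ 8*M*r/L^2 := by
      rw [inv_sub_inv (ne_of_gt hSp0) (ne_of_gt hSq0), abs_div,
        abs_of_pos (mul_pos hSp0 hSq0)]
      calc |Sq - Sp| / (Sp * Sq) ≤ (2*M*r) / (L^2/4) := by
            apply div_le_div₀ (by positivity) hSpq (by positivity)
            nlinarith
        _ = 8*M*r/L^2 := by field_simp; ring
    nlinarith [norm_nonneg q, abs_nonneg (Sp⁻¹ - Sq⁻¹)]
  have hεL : 4*r + 16*M*r ≤ ε * L := by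
    have h1 : (4*r + 16*M*r)/ε ≤ L := by
      have : (0:ℝ) ≤ 2*M*r + r + 1 := by positivity
      linarith
    calc 4*r + 16*M*r = ((4*r + 16*M*r)/ε) * ε := by field_simp
      _ ≤ L * ε := mul_le_mul_of_nonneg_right h1 (le_of_lt hε)
      _ = ε * L := mul_comm _ _
  calc ‖Sp⁻¹ • p - Sq⁻¹ • q‖ = ‖Sp⁻¹ • (p - q) + (Sp⁻¹ - Sq⁻¹) • q‖ := by rw [hdec]
    _ ≤ ‖Sp⁻¹ • (p - q)‖ + ‖(Sp⁻¹ - Sq⁻¹) • q‖ := norm_add_le _ _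
    _ ≤ (2/L) * (2*r) + (8*M*r/L^2) * (2*L) := add_le_add hterm1 hterm2
    _ = (4*r + 16*M*r)/L := by field_simp; ring
    _ ≤ ε := by rw [div_le_iff₀ hL0]; linarith

/-- Shrinking of radial projections of distant balls (key geometric
step of Theorem 2), together with the consequence that the diameter of the
radial projection of compact sets carried off to infinity inside balls of fixed
radius tends to zero. -/
theorem radial_projection_shrinks (d : ℕ) (hd : 1 ≤ d) :
    (∀ r > (0:ℝ), ∀ ε > (0:ℝ), ∃ R > (0:ℝ), ∀ c : E d, (∀ i, 0 ≤ c i) → R ≤ ‖c‖ →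
      ∀ p ∈ Metric.closedBall c r, ∀ q ∈ Metric.closedBall c r,
        (∀ i, 0 < p i) → (∀ i, 0 < q i) →
        ‖(∑ i, p i)⁻¹ • p - (∑ i, q i)⁻¹ • q‖ ≤ ε) ∧
    (∀ r > (0:ℝ), ∀ (K : ℝ → Set (E d)) (c : ℝ → E d),
      (∀ t, IsCompact (K t)) →
      (∀ t, K t ⊆ {p : E d | ∀ i, 0 < p i}) →
      (∀ t, K t ⊆ Metric.closedBall (c t) r) →
      Tendsto (fun t => ‖c t‖) atTop atTop →
      Tendsto (fun t => Metric.diam ((fun p : E d => (∑ i, p i)⁻¹ • p) '' K t))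
        atTop (𝓝 0)) := by
  refine ⟨key d hd, ?_⟩
  have keyh := key d hd
  intro r hr K c hK hKpos hKball hc
  rw [Metric.tendsto_nhds]
  intro ε hε
  obtain ⟨R, hR0, hmain⟩ := keyh (2*r) (by linarith) (ε/2) (half_pos hε)
  filter_upwards [hc.eventually_ge_atTop (R + r)] with t ht
  have hdiam : Metric.diam ((fun p : E d => (∑ i, p i)⁻¹ • p) '' K t) ≤ ε/2 := by
    rcases Set.eq_empty_or_nonempty (K t) with he | ⟨p₀, hp₀⟩
    · simp [he, Metric.diam_empty]; linarith
    · have hp₀pos : ∀ i, 0 < p₀ i := hKpos t hp₀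
      have hp₀nn : ∀ i, 0 ≤ p₀ i := fun i => le_of_lt (hp₀pos i)
      have hp₀R : R ≤ ‖p₀‖ := by
        have h1 : ‖c t‖ ≤ ‖c t - p₀‖ + ‖p₀‖ := by
          calc ‖c t‖ = ‖(c t - p₀) + p₀‖ := by rw [sub_add_cancel]
            _ ≤ ‖c t - p₀‖ + ‖p₀‖ := norm_add_le _ _
        have h2 : ‖c t - p₀‖ ≤ r := by
          rw [← dist_eq_norm, dist_comm]
          exact hKball t hp₀
        linarith
      have hball : ∀ x ∈ K t, x ∈ Metric.closedBall p₀ (2*r) := by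
        intro x hx
        have h1 : dist x p₀ ≤ dist x (c t) + dist (c t) p₀ := dist_triangle _ _ _
        have h2 : dist x (c t) ≤ r := hKball t hx
        have h3 : dist (c t) p₀ ≤ r := by rw [dist_comm]; exact hKball t hp₀
        simp only [Metric.mem_closedBall]
        linarith
      apply Metric.diam_le_of_forall_dist_le (by linarith)
      rintro x ⟨p, hp, rfl⟩ y ⟨q, hq, rfl⟩
      rw [dist_eq_norm]
      exact hmain p₀ hp₀nn hp₀R p (hball p hp) q (hball q hq) (hKpos t hp) (hKpos t hq)
  rw [Real.dist_eq, abs_of_nonneg (by simpa using Metric.diam_nonneg)]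
  linarith
end
end
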